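/- arXiv:1908.11478 — 4 statements merged into one kernel-verified Lean document; each statement's English description precedes it below -/
import Mathlib

section
/- For every integer k ≥ 3, if G is a finite connected graph containing no induced path on k vertices, then the cop number of G is at most k − 2. -/
open SimpleGraph

/-- The sequence of positions in a play of the Cops and Robber game:
`(copsRobberSeq init F rob r₀ t).1` are the cop positions and `.2` the robber
position after round `t`. In each round the cops move first, then the robber. -/
def copsRobberSeq {V : Type*} {n : ℕ} (init : Fin n → V)
    (F : (Fin n → V) → V → (Fin n → V)) (rob : (Fin n → V) → V → V) (r₀ : V) :
    ℕ → (Fin n → V) × V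
  | 0 => (init, r₀)
  | t + 1 =>
      let p := copsRobberSeq init F rob r₀ t
      let c' := F p.1 p.2
      (c', rob c' p.2)

/-- `CopWinWith G n` means that `n` cops have a strategy on the graph `G`
(choice of initial positions and a move function, each move staying put or
going to an adjacent vertex) that captures the robber against every robber
strategy: at some round, some cop occupies the robber's current vertex. -/
def CopWinWith {V : Type*} (G : SimpleGraph V) (n : ℕ) : Prop :=
  ∃ (init : Fin n → V) (F : (Fin n → V) → V → (Fin n → V)),
    (∀ c r i, F c r i = c i ∨ G.Adj (c i) (F c r i)) ∧
    ∀ (r₀ : V) (rob : (Fin n → V) → V → V),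
      (∀ c r, rob c r = r ∨ G.Adj r (rob c r)) →
      ∃ t, (∃ i, (copsRobberSeq init F rob r₀ t).1 i = (copsRobberSeq init F rob r₀ t).2) ∨
           (∃ i, (copsRobberSeq init F rob r₀ (t + 1)).1 i = (copsRobberSeq init F rob r₀ t).2)

/-- The cop number of `G`: the least `n` such that `n` cops can guarantee capture. -/
noncomputable def copNumber {V : Type*} (G : SimpleGraph V) : ℕ :=
  sInf {n | CopWinWith G n}

/-!
Gyárfás' path argument, run by the cops. For a robber at `r` put `u₀ = v₀`, `C₀ = V`, let
`C_{i+1}` be the component of `r` in `C_i \ N[u_i]` and `u_{i+1}` a neighbour of `u_i` in `C_i`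
with a neighbour in `C_{i+1}`. If `r ∈ C_m`, then `u₀, …, u_m` followed by a neighbour of `u_m`
in `C_m` is an induced path on `m + 2` vertices, so in a `P_k`-free graph the robber is never in
`C_{k-2}`.

Take `m = k - 2` cops. While cops `0, …, j-1` sit on `u₀, …, u_{j-1}`, a robber who is not caught
avoids their closed neighbourhoods, hence stays in `C_j`, and then `u₀, …, u_j` do not change.
The other cops walk to `u_j` along shortest paths. Every round either settles one more cop or
brings cop `j` closer to `u_j`, and `j < m` always holds, so the robber is caught.
-/

namespace SimpleGraph

variable {V : Type*} {G : SimpleGraph V}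

variable (G) in
def closedNeighborSet (v : V) : Set V := insert v (G.neighborSet v)

@[simp]
lemma mem_closedNeighborSet {v w : V} : w ∈ G.closedNeighborSet v ↔ w = v ∨ G.Adj v w :=
  Iff.rfl

variable (G) in
/-- The vertex set of the component of `r` in the subgraph induced by `s` (empty if `r ∉ s`). -/
def componentIn (s : Set V) (r : V) : Set V :=
  {x | ∃ p : G.Walk r x, ∀ v ∈ p.support, v ∈ s}

section componentIn

variable {s : Set V} {r x y : V}

lemma componentIn_subset : G.componentIn s r ⊆ s :=
  fun _ ⟨p, hp⟩ => hp _ p.end_mem_support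

lemma mem_componentIn_self : r ∈ G.componentIn s r ↔ r ∈ s :=
  ⟨fun h => componentIn_subset h, fun h => ⟨Walk.nil, by simpa using h⟩⟩

lemma mem_componentIn_of_adj (hx : x ∈ G.componentIn s r) (hy : y ∈ s) (hxy : G.Adj x y) :
    y ∈ G.componentIn s r := by
  obtain ⟨p, hp⟩ := hx
  refine ⟨p.concat hxy, fun v hv => ?_⟩
  rw [Walk.support_concat, List.mem_append, List.mem_singleton] at hv
  rcases hv with hv | rfl
  exacts [hp v hv, hy]

lemma componentIn_eq_of_mem (h : x ∈ G.componentIn s r) :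
    G.componentIn s x = G.componentIn s r := by
  obtain ⟨p, hp⟩ := h
  ext y
  constructor
  · rintro ⟨q, hq⟩
    refine ⟨p.append q, fun v hv => ?_⟩
    rcases (Walk.mem_support_append_iff _ _).1 hv with hv | hv
    exacts [hp v hv, hq v hv]
  · rintro ⟨q, hq⟩
    refine ⟨p.reverse.append q, fun v hv => ?_⟩
    rcases (Walk.mem_support_append_iff _ _).1 hv with hv | hv
    exacts [hp v (by simpa using hv), hq v hv]

lemma componentIn_componentIn : G.componentIn (G.componentIn s r) r = G.componentIn s r := by
  classical
  refine subset_antisymm componentIn_subset fun x ⟨p, hp⟩ => ⟨p, fun v hv => ?_⟩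
  exact ⟨p.takeUntil v hv, fun w hw => hp w (p.support_takeUntil_subset_support hv hw)⟩

/-- A walk in `s` from `r` to a neighbour of `u` leaves the component of `r` in `s \ N[u]`
through an edge `zx`, and `x` is then a neighbour of `u`. -/
lemma exists_adj_adj_of_mem_componentIn_diff {u : V}
    (hr : r ∈ G.componentIn (s \ G.closedNeighborSet u) r) (hy : y ∈ G.componentIn s r)
    (huy : G.Adj u y) :
    ∃ x ∈ s, G.Adj u x ∧ ∃ z ∈ G.componentIn (s \ G.closedNeighborSet u) r, G.Adj x z := by
  obtain ⟨p, hp⟩ := hy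
  have hy' : y ∉ G.componentIn (s \ G.closedNeighborSet u) r :=
    fun h => (componentIn_subset h).2 (Or.inr huy)
  obtain ⟨d, hd, hfst, hsnd⟩ := p.exists_boundary_dart _ hr hy'
  have hs : d.snd ∈ s := hp _ (p.dart_snd_mem_support_of_mem_darts hd)
  have hfst' : d.fst ∉ G.closedNeighborSet u := (componentIn_subset hfst).2
  have hnbd : d.snd ∈ G.closedNeighborSet u := by
    by_contra h
    exact hsnd (mem_componentIn_of_adj hfst ⟨hs, h⟩ d.adj)
  have hne : d.snd ≠ u := fun h => hfst' (Or.inr (h ▸ d.adj.symm))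
  exact ⟨d.snd, hs, hnbd.resolve_left hne, d.fst, hfst, d.adj.symm⟩

end componentIn

lemma nonempty_pathGraph_embedding {m : ℕ} (w : ℕ → V)
    (hadj : ∀ i < m, G.Adj (w i) (w (i + 1)))
    (hfar : ∀ a b, a + 1 < b → b ≤ m → w b ∉ G.closedNeighborSet (w a)) :
    Nonempty (pathGraph (m + 1) ↪g G) := by
  have key : ∀ a b, a < b → b ≤ m → w a ≠ w b ∧ (G.Adj (w a) (w b) ↔ a + 1 = b) := by
    intro a b hab hb
    rcases (Nat.succ_le_of_lt hab).eq_or_lt with rfl | hlt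
    · exact ⟨(hadj a hb).ne, iff_of_true (hadj a hb) rfl⟩
    · have h := hfar a b hlt hb
      simp only [mem_closedNeighborSet, not_or] at h
      exact ⟨Ne.symm h.1, iff_of_false h.2 hlt.ne⟩
  refine ⟨⟨⟨fun i => w i, fun a b hab => ?_⟩, fun {a b} => ?_⟩⟩
  · by_contra hne
    rcases Nat.lt_or_gt_of_ne (Fin.val_ne_of_ne hne) with h | h
    · exact (key a b h (by omega)).1 hab
    · exact (key b a h (by omega)).1 hab.symm
  · change G.Adj (w a) (w b) ↔ _
    rw [pathGraph_adj]
    rcases Nat.lt_trichotomy a b with h | h | h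
    · rw [(key a b h (by omega)).2]; omega
    · rw [Fin.ext h]; simp
    · rw [G.adj_comm, (key b a h (by omega)).2]; omega

variable (G) in
/-- A neighbour of `a` closer to `b`, or `a` itself if there is none. -/
noncomputable def stepToward (a b : V) : V :=
  open Classical in
  if h : ∃ x, G.Adj a x ∧ G.dist x b < G.dist a b then h.choose else a

lemma stepToward_eq_or_adj (a b : V) : G.stepToward a b = a ∨ G.Adj a (G.stepToward a b) := by
  unfold stepToward
  split_ifs with h
  exacts [Or.inr h.choose_spec.1, Or.inl rfl]

lemma Connected.adj_stepToward_and_dist_lt (hconn : G.Connected) {a b : V} (hab : a ≠ b) :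
    G.Adj a (G.stepToward a b) ∧ G.dist (G.stepToward a b) b < G.dist a b := by
  have h : ∃ x, G.Adj a x ∧ G.dist x b < G.dist a b := by
    obtain ⟨p, hp⟩ := hconn.exists_walk_length_eq_dist a b
    cases p with
    | nil => exact absurd rfl hab
    | cons hadj q =>
      refine ⟨_, hadj, ?_⟩
      have := dist_le q
      simp only [Walk.length_cons] at hp
      omega
  unfold stepToward
  rw [dif_pos h]
  exact h.choose_spec

section gyarfas

variable (G) (v₀ : V)

/-- One step of Gyárfás' construction for a robber at `r`, from a path vertex `u = p.1` and its
region `C = p.2`. -/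
noncomputable def gyarfasStep (r : V) (p : V × Set V) : V × Set V :=
  haveI : Nonempty V := ⟨p.1⟩
  let C := G.componentIn (p.2 \ G.closedNeighborSet p.1) r
  (Classical.epsilon fun x => x ∈ p.2 ∧ G.Adj p.1 x ∧ ∃ y ∈ C, G.Adj x y, C)

noncomputable def gyarfasSeq (r : V) : ℕ → V × Set V
  | 0 => (v₀, Set.univ)
  | i + 1 => G.gyarfasStep r (gyarfasSeq r i)

noncomputable def gyarfasVertex (r : V) (i : ℕ) : V := (G.gyarfasSeq v₀ r i).1

noncomputable def gyarfasRegion (r : V) (i : ℕ) : Set V := (G.gyarfasSeq v₀ r i).2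

variable {G v₀} {r r' : V} {i j : ℕ}

lemma gyarfasRegion_succ :
    G.gyarfasRegion v₀ r (i + 1) =
      G.componentIn (G.gyarfasRegion v₀ r i \ G.closedNeighborSet (G.gyarfasVertex v₀ r i)) r :=
  rfl

lemma gyarfasRegion_succ_subset :
    G.gyarfasRegion v₀ r (i + 1) ⊆
      G.gyarfasRegion v₀ r i \ G.closedNeighborSet (G.gyarfasVertex v₀ r i) :=
  componentIn_subset

lemma gyarfasRegion_antitone : Antitone (G.gyarfasRegion v₀ r) :=
  antitone_nat_of_succ_le fun _ => gyarfasRegion_succ_subset.trans Set.sdiff_subset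

lemma mem_gyarfasRegion_succ_self :
    r ∈ G.gyarfasRegion v₀ r (i + 1) ↔
      r ∈ G.gyarfasRegion v₀ r i ∧ r ∉ G.closedNeighborSet (G.gyarfasVertex v₀ r i) :=
  mem_componentIn_self

lemma gyarfasVertex_succ_spec_of_exists
    (h : ∃ x ∈ G.gyarfasRegion v₀ r i, G.Adj (G.gyarfasVertex v₀ r i) x ∧
      ∃ y ∈ G.gyarfasRegion v₀ r (i + 1), G.Adj x y) :
    G.gyarfasVertex v₀ r (i + 1) ∈ G.gyarfasRegion v₀ r i ∧
      G.Adj (G.gyarfasVertex v₀ r i) (G.gyarfasVertex v₀ r (i + 1)) ∧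
      ∃ y ∈ G.gyarfasRegion v₀ r (i + 1), G.Adj (G.gyarfasVertex v₀ r (i + 1)) y :=
  Classical.epsilon_spec h

lemma gyarfasVertex_succ_spec (hconn : G.Connected) :
    ∀ {i}, r ∈ G.gyarfasRegion v₀ r (i + 1) →
      G.gyarfasVertex v₀ r (i + 1) ∈ G.gyarfasRegion v₀ r i ∧
      G.Adj (G.gyarfasVertex v₀ r i) (G.gyarfasVertex v₀ r (i + 1)) ∧
      ∃ y ∈ G.gyarfasRegion v₀ r (i + 1), G.Adj (G.gyarfasVertex v₀ r (i + 1)) y := by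
  intro i hr
  apply gyarfasVertex_succ_spec_of_exists
  obtain ⟨y, hy, huy⟩ : ∃ y ∈ G.componentIn (G.gyarfasRegion v₀ r i) r,
      G.Adj (G.gyarfasVertex v₀ r i) y := by
    cases i with
    | zero =>
      have hne : v₀ ≠ r := fun h => (mem_gyarfasRegion_succ_self.1 hr).2 (Or.inl h.symm)
      obtain ⟨p⟩ := hconn.preconnected v₀ r
      cases p with
      | nil => exact absurd rfl hne
      | cons hadj q => exact ⟨_, ⟨q.reverse, fun _ _ => trivial⟩, hadj⟩
    | succ i =>
      obtain ⟨-, -, y, hy, huy⟩ :=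
        gyarfasVertex_succ_spec hconn (gyarfasRegion_antitone (Nat.le_succ _) hr)
      exact ⟨y, by rwa [gyarfasRegion_succ, componentIn_componentIn], huy⟩
  exact exists_adj_adj_of_mem_componentIn_diff hr hy huy

lemma gyarfasStep_eq_of_mem {p : V × Set V}
    (h : r' ∈ G.componentIn (p.2 \ G.closedNeighborSet p.1) r) :
    G.gyarfasStep r' p = G.gyarfasStep r p := by
  simp only [gyarfasStep, componentIn_eq_of_mem h]

lemma gyarfasSeq_eq_of_mem_gyarfasRegion (h : r' ∈ G.gyarfasRegion v₀ r j) :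
    ∀ i ≤ j, G.gyarfasSeq v₀ r' i = G.gyarfasSeq v₀ r i
  | 0, _ => rfl
  | i + 1, hi => by
    have ih := gyarfasSeq_eq_of_mem_gyarfasRegion h i (Nat.le_of_succ_le hi)
    have hmem : r' ∈ G.gyarfasRegion v₀ r (i + 1) := gyarfasRegion_antitone hi h
    change G.gyarfasStep r' _ = G.gyarfasStep r _
    rw [ih]
    exact gyarfasStep_eq_of_mem hmem

lemma mem_gyarfasRegion_of_mem_closedNeighborSet (hr' : r' ∈ G.closedNeighborSet r)
    (havoid : ∀ i < j, r' ∉ G.closedNeighborSet (G.gyarfasVertex v₀ r i)) :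
    r ∈ G.gyarfasRegion v₀ r j → r' ∈ G.gyarfasRegion v₀ r j := by
  induction j with
  | zero => exact fun _ => trivial
  | succ j ih =>
    intro hr
    have hr'j := ih (fun i hi => havoid i (Nat.lt_succ_of_lt hi))
      (gyarfasRegion_antitone (Nat.le_succ _) hr)
    rw [gyarfasRegion_succ] at hr ⊢
    rcases hr' with rfl | hadj
    · exact hr
    · exact mem_componentIn_of_adj hr ⟨hr'j, havoid j (Nat.lt_succ_self _)⟩ hadj

/-- The path is `u₀, …, u_{n+1}, y` with `y` a neighbour of `u_{n+1}` in `C_{n+1}`; it is induced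
because for `a + 1 < b` its `b`-th vertex lies in `C_{a+1}`, which avoids `N[u_a]`. -/
lemma nonempty_pathGraph_embedding_of_mem_gyarfasRegion (hconn : G.Connected) {n : ℕ}
    (h : r ∈ G.gyarfasRegion v₀ r (n + 1)) : Nonempty (pathGraph (n + 3) ↪g G) := by
  have hspec : ∀ i ≤ n, _ := fun i hi => gyarfasVertex_succ_spec (v₀ := v₀) hconn
    (gyarfasRegion_antitone (by omega : i + 1 ≤ n + 1) h)
  obtain ⟨y, hy, huy⟩ := (hspec n le_rfl).2.2
  let w : ℕ → V := fun i => if i ≤ n + 1 then G.gyarfasVertex v₀ r i else y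
  have hw : ∀ i ≤ n + 1, w i = G.gyarfasVertex v₀ r i := fun i hi => if_pos hi
  have hw_last : w (n + 2) = y := if_neg (by omega)
  have hmem : ∀ b ≤ n + 1, w (b + 1) ∈ G.gyarfasRegion v₀ r b := by
    intro b hb
    rcases hb.lt_or_eq with hb | rfl
    · rw [hw _ hb]; exact (hspec b (by omega)).1
    · rwa [hw_last]
  refine nonempty_pathGraph_embedding w (fun i hi => ?_) (fun a b hab hb => ?_)
  · rcases (Nat.le_of_lt_succ hi).lt_or_eq with hi | rfl
    · rw [hw i (by omega), hw (i + 1) hi]; exact (hspec i (by omega)).2.1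
    · rw [hw _ le_rfl, hw_last]; exact huy
  · obtain ⟨c, rfl⟩ : ∃ c, b = c + 1 := ⟨b - 1, by omega⟩
    rw [hw a (by omega)]
    exact (gyarfasRegion_succ_subset (gyarfasRegion_antitone (by omega) (hmem c (by omega)))).2

end gyarfas

section strategy

variable (G) (v₀ : V) {n : ℕ}

/-- The length of the longest prefix of the cops standing, in order, on `u₀, u₁, …`. -/
noncomputable def numSettled (c : Fin n → V) (r : V) : ℕ :=
  open Classical in
  Nat.find (⟨n, fun h => absurd h (lt_irrefl n)⟩ :
    ∃ j, ∀ h : j < n, c ⟨j, h⟩ ≠ G.gyarfasVertex v₀ r j)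

noncomputable def gyarfasStrategy (c : Fin n → V) (r : V) (i : Fin n) : V :=
  open Classical in
  if G.Adj (c i) r then r
  else if (i : ℕ) < G.numSettled v₀ c r then c i
  else G.stepToward (c i) (G.gyarfasVertex v₀ r (G.numSettled v₀ c r))

noncomputable def gyarfasPotential (c : Fin n → V) (r : V) : ℕ ×ₗ ℕ :=
  toLex (n - G.numSettled v₀ c r, if h : G.numSettled v₀ c r < n then
    G.dist (c ⟨_, h⟩) (G.gyarfasVertex v₀ r (G.numSettled v₀ c r)) else 0)

variable {G v₀} {c : Fin n → V} {r r' : V}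

lemma numSettled_le : G.numSettled v₀ c r ≤ n := by
  classical
  exact Nat.find_min' _ fun h => absurd h (lt_irrefl n)

lemma eq_gyarfasVertex_of_lt_numSettled (i : Fin n) (hi : (i : ℕ) < G.numSettled v₀ c r) :
    c i = G.gyarfasVertex v₀ r i := by
  classical
  by_contra hne
  exact Nat.find_min _ hi fun _ => hne

lemma ne_gyarfasVertex_numSettled (h : G.numSettled v₀ c r < n) :
    c ⟨_, h⟩ ≠ G.gyarfasVertex v₀ r (G.numSettled v₀ c r) := by
  classical
  exact Nat.find_spec (⟨n, fun h => absurd h (lt_irrefl n)⟩ :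
    ∃ j, ∀ h : j < n, c ⟨j, h⟩ ≠ G.gyarfasVertex v₀ r j) h

lemma le_numSettled {j : ℕ} (hj : j ≤ n)
    (h : ∀ i : Fin n, (i : ℕ) < j → c i = G.gyarfasVertex v₀ r i) :
    j ≤ G.numSettled v₀ c r := by
  classical
  exact (Nat.le_find_iff _ _).2 fun m hm hne => hne (by omega) (h ⟨m, by omega⟩ hm)

lemma numSettled_eq {j : ℕ} (hj : j < n)
    (h : ∀ i : Fin n, (i : ℕ) < j → c i = G.gyarfasVertex v₀ r i)
    (hne : c ⟨j, hj⟩ ≠ G.gyarfasVertex v₀ r j) :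
    G.numSettled v₀ c r = j := by
  classical
  exact (Nat.find_eq_iff _).2
    ⟨fun _ => hne, fun m hm hne' => hne' (by omega) (h ⟨m, by omega⟩ hm)⟩

lemma gyarfasStrategy_eq_or_adj (c : Fin n → V) (r : V) (i : Fin n) :
    G.gyarfasStrategy v₀ c r i = c i ∨ G.Adj (c i) (G.gyarfasStrategy v₀ c r i) := by
  unfold gyarfasStrategy
  split_ifs with hadj
  · exact Or.inr hadj
  · exact Or.inl rfl
  · exact G.stepToward_eq_or_adj _ _

lemma gyarfasStrategy_of_adj {i : Fin n} (h : G.Adj (c i) r) :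
    G.gyarfasStrategy v₀ c r i = r :=
  if_pos h

lemma mem_gyarfasRegion_numSettled (hsafe : ∀ i, r ∉ G.closedNeighborSet (c i)) :
    r ∈ G.gyarfasRegion v₀ r (G.numSettled v₀ c r) := by
  suffices ∀ j ≤ G.numSettled v₀ c r, r ∈ G.gyarfasRegion v₀ r j from this _ le_rfl
  intro j hj
  induction j with
  | zero => trivial
  | succ j ih =>
    have hjn : j < n := by have := numSettled_le (G := G) (v₀ := v₀) (c := c) (r := r); omega
    refine mem_gyarfasRegion_succ_self.2 ⟨ih (by omega), ?_⟩
    rw [← eq_gyarfasVertex_of_lt_numSettled ⟨j, hjn⟩ hj]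
    exact hsafe _

lemma numSettled_lt (hfree : ∀ x, x ∉ G.gyarfasRegion v₀ x n)
    (hsafe : ∀ i, r ∉ G.closedNeighborSet (c i)) : G.numSettled v₀ c r < n :=
  numSettled_le.lt_of_ne fun h => hfree r (h ▸ mem_gyarfasRegion_numSettled hsafe)

lemma gyarfasPotential_lt (hconn : G.Connected) (hfree : ∀ x, x ∉ G.gyarfasRegion v₀ x n)
    (hsafe : ∀ i, r ∉ G.closedNeighborSet (c i)) (hr' : r' ∈ G.closedNeighborSet r)
    (hsafe' : ∀ i, r' ∉ G.closedNeighborSet (G.gyarfasStrategy v₀ c r i)) :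
    G.gyarfasPotential v₀ (G.gyarfasStrategy v₀ c r) r' < G.gyarfasPotential v₀ c r := by
  set J := G.numSettled v₀ c r with hJ
  set c' := G.gyarfasStrategy v₀ c r
  have hJn : J < n := numSettled_lt hfree hsafe
  have hnadj : ∀ i, ¬ G.Adj (c i) r := fun i h => hsafe i (Or.inr h)
  have hc' : ∀ i : Fin n, (i : ℕ) < J → c' i = G.gyarfasVertex v₀ r i := fun i hi => by
    simp only [c', gyarfasStrategy, if_neg (hnadj i), ← hJ, if_pos hi]
    exact eq_gyarfasVertex_of_lt_numSettled i hi
  have hc'J : c' ⟨J, hJn⟩ = G.stepToward (c ⟨J, hJn⟩) (G.gyarfasVertex v₀ r J) := by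
    simp only [c', gyarfasStrategy, if_neg (hnadj _), ← hJ, lt_irrefl, if_false]
  -- the robber stays in `C_J`, so the Gyárfás path up to `u_J` does not change
  have hr'J : r' ∈ G.gyarfasRegion v₀ r J :=
    mem_gyarfasRegion_of_mem_closedNeighborSet hr'
      (fun i hi => hc' ⟨i, by omega⟩ hi ▸ hsafe' ⟨i, by omega⟩)
      (mem_gyarfasRegion_numSettled hsafe)
  have hu : ∀ i ≤ J, G.gyarfasVertex v₀ r' i = G.gyarfasVertex v₀ r i := fun i hi =>
    congrArg Prod.fst (gyarfasSeq_eq_of_mem_gyarfasRegion hr'J i hi)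
  have hsettled : ∀ i : Fin n, (i : ℕ) < J → c' i = G.gyarfasVertex v₀ r' i := fun i hi =>
    (hc' i hi).trans (hu i hi.le).symm
  simp only [gyarfasPotential, Prod.Lex.toLex_lt_toLex, ← hJ, dif_pos hJn]
  by_cases harrive : c' ⟨J, hJn⟩ = G.gyarfasVertex v₀ r' J
  · left
    have : J + 1 ≤ G.numSettled v₀ c' r' := le_numSettled hJn fun i hi => by
      rcases (Nat.le_of_lt_succ hi).lt_or_eq with hi | hi
      · exact hsettled i hi
      · obtain rfl : i = ⟨J, hJn⟩ := Fin.ext hi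
        exact harrive
    have := numSettled_le (G := G) (v₀ := v₀) (c := c') (r := r')
    omega
  · right
    have hJ' : G.numSettled v₀ c' r' = J := numSettled_eq hJn hsettled harrive
    simp only [hJ', dif_pos hJn, true_and, hc'J, hu J le_rfl]
    exact (hconn.adj_stepToward_and_dist_lt (ne_gyarfasVertex_numSettled hJn)).2

end strategy

end SimpleGraph

theorem copWinWith_of_forall_not_mem_gyarfasRegion {V : Type*} {G : SimpleGraph V} {n : ℕ}
    (v₀ : V) (hconn : G.Connected) (hfree : ∀ x, x ∉ G.gyarfasRegion v₀ x n) :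
    CopWinWith G n := by
  refine ⟨fun _ => v₀, G.gyarfasStrategy v₀, gyarfasStrategy_eq_or_adj,
    fun r₀ rob hrob => ?_⟩
  set play := copsRobberSeq (fun _ => v₀) (G.gyarfasStrategy v₀) rob r₀
  by_contra! hnever
  have hsafe : ∀ t i, (play t).2 ∉ G.closedNeighborSet ((play t).1 i) := by
    rintro t i (h | h)
    · exact (hnever t).1 i h.symm
    · exact (hnever t).2 i (gyarfasStrategy_of_adj h)
  obtain ⟨t, ht⟩ := WellFounded.not_rel_apply_succ (r := (· < ·))
    fun t => G.gyarfasPotential v₀ (play t).1 (play t).2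
  exact ht (gyarfasPotential_lt hconn hfree (hsafe t) (hrob _ _) (hsafe (t + 1)))

theorem cop_number_of_pathFree_general {V : Type*} (G : SimpleGraph V) (k : ℕ)
    (hk : 3 ≤ k) (hconn : G.Connected)
    (hfree : IsEmpty (pathGraph k ↪g G)) :
    copNumber G ≤ k - 2 := by
  obtain ⟨v₀⟩ := hconn.nonempty
  obtain ⟨n, rfl⟩ : ∃ n, k = n + 3 := ⟨k - 3, by omega⟩
  show copNumber G ≤ n + 1
  refine Nat.sInf_le (copWinWith_of_forall_not_mem_gyarfasRegion v₀ hconn fun r hr => ?_)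
  exact hfree.false (nonempty_pathGraph_embedding_of_mem_gyarfasRegion hconn hr).some

theorem cop_number_of_pathFree {V : Type*} [Fintype V] (G : SimpleGraph V) (k : ℕ)
    (hk : 3 ≤ k) (hconn : G.Connected)
    (hfree : IsEmpty (pathGraph k ↪g G)) :
    copNumber G ≤ k - 2 :=
  cop_number_of_pathFree_general G k hk hconn hfree
end

section
/- For every integer k ≥ 5, if a finite connected graph G contains no induced path on k vertices and no induced copy of the claw K_{1,3}, then the cop number of G is at most k − 3. -/
open SimpleGraph

/-!
The cops grow an induced path `p₀ … pₘ`, one cop standing on each of its vertices, so that the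
robber is trapped in a connected region `C` that avoids the closed neighbourhoods of the path
and whose outside neighbours all lie in them. A spare cop walks to a vertex `w` adjacent to `pₘ`,
to no earlier `pᵢ`, and to some vertex of `C`. The robber is then trapped in a component `D` of
`C ∖ N[w]`, and `D` has a neighbour `b ∈ C` adjacent to `w`.

If `b` dominates `D`, the spare cop steps onto `b` and captures next round: a robber escaping
into `N(w) ∩ C` lands on a vertex that is adjacent to `b`, as otherwise it would form a claw at
`w` together with `b` and `pₘ`. Otherwise some edge `u v` of `D` has `u ∼ b ≁ v`, so
`p₀ … pₘ w b u v` is an induced path on `m + 5` vertices; `P_k`-freeness then leaves a cop for one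
more station, and the spare cop stays on `w` as the new end of the path, with `D ⊊ C` as the new
region. The region shrinks each time, so the robber is eventually caught; the path starts as a
single vertex, and two cops for the start suffice because `k ≥ 5`.
-/

lemma Fin.comp_castLE_eq_snoc {α : Type*} {m n : ℕ} (h : m + 2 ≤ n) (c : Fin n → α) :
    c ∘ Fin.castLE h = Fin.snoc (c ∘ Fin.castLE (by omega)) (c ⟨m + 1, by omega⟩) := by
  funext i
  induction i using Fin.lastCases <;> simp [Fin.castLE]

namespace SimpleGraph

variable {V : Type*} (G : SimpleGraph V)

def closedNbhd (u : V) : Set V := {v | v = u ∨ G.Adj u v}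

def Dominates {n : ℕ} (c : Fin n → V) (r : V) : Prop := ∃ i, r ∈ G.closedNbhd (c i)

inductive ReachIn (S : Set V) (x : V) : V → Prop
  | refl : x ∈ S → ReachIn S x x
  | tail {y z : V} : ReachIn S x y → G.Adj y z → z ∈ S → ReachIn S x z

variable {G}

@[simp] lemma mem_closedNbhd {u v : V} : v ∈ G.closedNbhd u ↔ v = u ∨ G.Adj u v := Iff.rfl

lemma Dominates.comp {n m : ℕ} {c : Fin n → V} {e : Fin m → Fin n} {r : V}
    (h : G.Dominates (c ∘ e) r) : G.Dominates c r :=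
  let ⟨i, hi⟩ := h; ⟨e i, hi⟩

lemma dominates_snoc {n : ℕ} {c : Fin n → V} {v r : V} :
    G.Dominates (Fin.snoc c v : Fin (n + 1) → V) r ↔
      G.Dominates c r ∨ r ∈ G.closedNbhd v := by
  simp only [Dominates, Fin.exists_fin_succ', Fin.snoc_castSucc, Fin.snoc_last]

namespace ReachIn

variable {S : Set V} {x y z : V}

lemma mem_left (h : G.ReachIn S x y) : x ∈ S := by
  induction h with
  | refl hx => exact hx
  | tail _ _ _ ih => exact ih

lemma mem_right : G.ReachIn S x y → y ∈ S
  | refl hx => hx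
  | tail _ _ hz => hz

lemma trans (hxy : G.ReachIn S x y) (hyz : G.ReachIn S y z) : G.ReachIn S x z := by
  induction hyz with
  | refl _ => exact hxy
  | tail _ ha hz ih => exact ih.tail ha hz

lemma symm (h : G.ReachIn S x y) : G.ReachIn S y x := by
  induction h with
  | refl hx => exact refl hx
  | tail h ha hz ih => exact ((refl hz).tail ha.symm h.mem_right).trans ih

lemma restrict (h : G.ReachIn S x y) : G.ReachIn {z | G.ReachIn S x z} x y := by
  induction h with
  | refl hx => exact refl (refl hx)
  | tail h ha hz ih => exact ih.tail ha (h.tail ha hz)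

lemma exists_adj_of_not {P : V → Prop} (h : G.ReachIn S x y) (hx : P x) (hy : ¬ P y) :
    ∃ u v, u ∈ S ∧ v ∈ S ∧ G.Adj u v ∧ P u ∧ ¬ P v := by
  induction h with
  | refl _ => exact absurd hx hy
  | @tail y z h ha hz ih =>
    by_cases hPy : P y
    · exact ⟨y, z, h.mem_right, hz, ha, hPy, hy⟩
    · exact ih hPy

lemma of_reachable (h : G.Reachable x y) : G.ReachIn Set.univ x y := by
  rw [reachable_iff_reflTransGen] at h
  induction h with
  | refl => exact refl trivial
  | tail _ ha ih => exact ih.tail ha trivial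

end ReachIn

lemma exists_adj_of_reachIn {C : Set V} {r a w : V} (hra : G.ReachIn C r a)
    (hr : r ∉ G.closedNbhd w) (ha : a ∈ G.closedNbhd w) :
    ∃ x b, G.ReachIn (C \ G.closedNbhd w) r x ∧ b ∈ C ∧ G.Adj w b ∧ G.Adj x b := by
  obtain ⟨x, b, -, hb, hxb, hx, hbD⟩ := hra.exists_adj_of_not
    (P := G.ReachIn (C \ G.closedNbhd w) r) (.refl ⟨hra.mem_left, hr⟩)
    fun h => h.mem_right.2 ha
  refine ⟨x, b, hx, hb, ?_, hxb⟩
  by_contra hwb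
  refine hbD (hx.tail hxb ⟨hb, ?_⟩)
  rintro (rfl | h)
  · exact hx.mem_right.2 (Or.inr hxb.symm)
  · exact hwb h

lemma lt_of_isEmpty_pathGraph_embedding {N M : ℕ} (hP : IsEmpty (pathGraph N ↪g G))
    (p : pathGraph M ↪g G) : M < N := by
  by_contra! h
  exact hP.false <| p.comp
    { toEmbedding := Fin.castLEEmb h
      map_rel_iff' := by simp [pathGraph_adj] }

def Embedding.snocPath {m : ℕ} (p : pathGraph (m + 1) ↪g G) (v : V)
    (hv : G.Adj (p (Fin.last m)) v) (hfar : ¬ G.Dominates (p ∘ Fin.castSucc) v) :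
    pathGraph (m + 2) ↪g G where
  toFun := Fin.snoc p v
  inj' := by
    have hne : ∀ i, p i ≠ v := Fin.lastCases hv.ne fun i h => hfar ⟨i, Or.inl h.symm⟩
    intro i j hij
    induction i using Fin.lastCases <;> induction j using Fin.lastCases <;>
      simp_all [Fin.snoc_castSucc, Fin.snoc_last, (hne _).symm]
  map_rel_iff' := by
    have hadj : ∀ i, G.Adj (p i) v ↔ i = Fin.last m :=
      Fin.lastCases (by simpa using hv) fun i =>
        iff_of_false (fun h => hfar ⟨i, Or.inr h⟩) (Fin.castSucc_ne_last i)
    intro i j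
    change G.Adj (Fin.snoc (α := fun _ => V) p v i) (Fin.snoc (α := fun _ => V) p v j) ↔ _
    induction i using Fin.lastCases <;> induction j using Fin.lastCases <;>
      simp [hadj, G.adj_comm v, pathGraph_adj, Fin.ext_iff] <;> omega

@[simp] lemma Embedding.coe_snocPath {m : ℕ} (p : pathGraph (m + 1) ↪g G) (v : V)
    (hv : G.Adj (p (Fin.last m)) v) (hfar : ¬ G.Dominates (p ∘ Fin.castSucc) v) :
    ⇑(p.snocPath v hv hfar) = Fin.snoc p v := rfl

lemma adj_of_isEmpty_claw_embedding
    (hclaw : IsEmpty (completeBipartiteGraph (Fin 1) (Fin 3) ↪g G))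
    {x a b c : V} (hxa : G.Adj x a) (hxb : G.Adj x b) (hxc : G.Adj x c)
    (hb : b ∉ G.closedNbhd a) (hc : c ∉ G.closedNbhd a) (hbc : b ≠ c) : G.Adj b c := by
  by_contra hbc'
  simp only [mem_closedNbhd, not_or] at hb hc
  have := hxa.ne; have := hxb.ne; have := hxc.ne
  refine hclaw.false ⟨⟨Sum.elim (fun _ => x) ![a, b, c], ?_⟩, fun {u v} => ?_⟩
  · rintro (u | u) (v | v) h <;> fin_cases u <;> fin_cases v <;> simp_all [eq_comm]
  · change G.Adj (Sum.elim (fun _ => x) ![a, b, c] u) (Sum.elim (fun _ => x) ![a, b, c] v) ↔ _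
    rcases u with u | u <;> rcases v with v | v <;> fin_cases u <;> fin_cases v <;>
      simp_all [hxa.symm, hxb.symm, hxc.symm, G.adj_comm c, G.adj_comm b a]

end SimpleGraph

namespace CopsAndRobber

variable {V : Type*} {G : SimpleGraph V} {n m : ℕ}

variable (G) in
def IsMove (c c' : Fin n → V) : Prop := ∀ i, c' i ∈ G.closedNbhd (c i)

variable (G) in
/-- `WinsWithin G j c r`: the cops at `c`, about to move, can force capture within `j` rounds;
with no round left they must already dominate the robber `r`, so that one cop steps onto it. -/
def WinsWithin : ℕ → (Fin n → V) → V → Prop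
  | 0, c, r => G.Dominates c r
  | j + 1, c, r => G.Dominates c r ∨
      ∃ c', IsMove G c c' ∧ ∀ r' ∈ G.closedNbhd r, WinsWithin j c' r'

variable (G) in
def Wins (c : Fin n → V) (r : V) : Prop := ∃ j, WinsWithin G j c r

lemma WinsWithin.dominates_or {j : ℕ} {c : Fin n → V} {r : V} (h : WinsWithin G j c r) :
    G.Dominates c r ∨
      ∃ c', IsMove G c c' ∧ ∀ r' ∈ G.closedNbhd r, WinsWithin G (j - 1) c' r' := by
  cases j with
  | zero => exact Or.inl h
  | succ j => exact h

lemma WinsWithin.mono {j j' : ℕ} {c : Fin n → V} {r : V} (h : WinsWithin G j c r)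
    (hj : j ≤ j') : WinsWithin G j' c r := by
  induction j' generalizing j c r with
  | zero => rwa [Nat.le_zero.mp hj] at h
  | succ j' ih =>
    rcases h.dominates_or with h | ⟨c', hc', h⟩
    · exact Or.inl h
    · exact Or.inr ⟨c', hc', fun r' hr' => ih (h r' hr') (by omega)⟩

lemma wins_of_dominates {c : Fin n → V} {r : V} (h : G.Dominates c r) : Wins G c r := ⟨0, h⟩

lemma wins_of_isMove [Finite V] {c c' : Fin n → V} {r : V} (hc : IsMove G c c')
    (h : ∀ r' ∈ G.closedNbhd r, Wins G c' r') : Wins G c r := by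
  choose! j hj using h
  obtain ⟨M, hM⟩ := ((G.closedNbhd r).toFinite.image j).bddAbove
  exact ⟨M + 1, Or.inr ⟨c', hc, fun r' hr' => (hj r' hr').mono (hM ⟨r', hr', rfl⟩)⟩⟩

lemma isMove_update [DecidableEq (Fin n)] (c : Fin n → V) {f : Fin n} {v : V}
    (hv : v ∈ G.closedNbhd (c f)) : IsMove G c (Function.update c f v) := by
  intro i
  rcases eq_or_ne i f with rfl | hi
  · simpa using hv
  · simp [hi]

lemma exists_optimal_move {c : Fin n → V} {r : V} (hc : ¬ G.Dominates c r) :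
    ∃ c', IsMove G c c' ∧
      ∀ j, WinsWithin G (j + 1) c r → ∀ r' ∈ G.closedNbhd r, WinsWithin G j c' r' := by
  classical
  by_cases hw : Wins G c r
  · obtain ⟨c', hc', h⟩ := (Nat.find_spec hw).dominates_or.resolve_left hc
    refine ⟨c', hc', fun j hj r' hr' => (h r' hr').mono ?_⟩
    have := Nat.find_min' hw hj
    omega
  · exact ⟨c, fun i => Or.inl rfl, fun j hj => absurd ⟨j + 1, hj⟩ hw⟩

open Classical in
variable (G) in
noncomputable def winningMove (c : Fin n → V) (r : V) : Fin n → V :=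
  if h : G.Dominates c r then Function.update c h.choose r else (exists_optimal_move h).choose

lemma isMove_winningMove (c : Fin n → V) (r : V) : IsMove G c (winningMove G c r) := by
  unfold winningMove
  split_ifs with h
  · exact isMove_update c h.choose_spec
  · exact (exists_optimal_move h).choose_spec.1

lemma exists_winningMove_eq {c : Fin n → V} {r : V} (h : G.Dominates c r) :
    ∃ i, winningMove G c r i = r :=
  ⟨h.choose, by simp [winningMove, h]⟩

lemma WinsWithin.winningMove {j : ℕ} {c : Fin n → V} {r r' : V} (h : WinsWithin G (j + 1) c r)
    (hc : ¬ G.Dominates c r) (hr' : r' ∈ G.closedNbhd r) :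
    WinsWithin G j (winningMove G c r) r' := by
  simpa [CopsAndRobber.winningMove, hc] using (exists_optimal_move hc).choose_spec.2 j h r' hr'

theorem copWinWith_of_forall_wins (init : Fin n → V) (h : ∀ r, Wins G init r) :
    CopWinWith G n := by
  refine ⟨init, winningMove G, fun c r => isMove_winningMove c r, fun r₀ rob hrob => ?_⟩
  let play := copsRobberSeq init (winningMove G) rob r₀
  suffices ∀ j t, WinsWithin G j (play t).1 (play t).2 →
      ∃ t i, (play (t + 1)).1 i = (play t).2 by
    obtain ⟨j, hj⟩ := h r₀
    obtain ⟨t, i, hi⟩ := this j 0 hj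
    exact ⟨t, Or.inr ⟨i, hi⟩⟩
  intro j
  induction j with
  | zero => exact fun t ht => ⟨t, exists_winningMove_eq ht⟩
  | succ j ih =>
    intro t ht
    by_cases hc : G.Dominates (play t).1 (play t).2
    · exact ⟨t, exists_winningMove_eq hc⟩
    · exact ih (t + 1) (ht.winningMove hc (hrob _ _))

variable (G) in
/-- While cops stand on the vertices `s i`, a robber in `C` can never leave `C` uncaught. -/
structure IsTerritory (s : Fin m → V) (C : Set V) : Prop where
  not_dominates : ∀ x ∈ C, ¬ G.Dominates s x
  mem_or_dominates : ∀ x ∈ C, ∀ y ∈ G.closedNbhd x, y ∈ C ∨ G.Dominates s y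
  reachIn : ∀ x ∈ C, ∀ y ∈ C, G.ReachIn C x y

lemma isTerritory_univ (hG : G.Preconnected) : IsTerritory G ![] (Set.univ : Set V) where
  not_dominates _ _ := fun ⟨i, _⟩ => i.elim0
  mem_or_dominates _ _ _ _ := Or.inl trivial
  reachIn x _ y _ := .of_reachable (hG x y)

lemma IsTerritory.component {s : Fin m → V} {C : Set V} (hC : IsTerritory G s C) (r w : V) :
    IsTerritory G (Fin.snoc s w : Fin (m + 1) → V)
      {x | G.ReachIn (C \ G.closedNbhd w) r x} where
  not_dominates x hx := by
    rw [dominates_snoc, not_or]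
    exact ⟨hC.not_dominates x hx.mem_right.1, hx.mem_right.2⟩
  mem_or_dominates x hx y hy := by
    rw [dominates_snoc]
    rcases hC.mem_or_dominates x hx.mem_right.1 y hy with hyC | hys
    · by_cases hyw : y ∈ G.closedNbhd w
      · exact Or.inr (Or.inr hyw)
      · rcases hy with rfl | hxy
        · exact Or.inl hx
        · exact Or.inl (hx.tail hxy ⟨hyC, hyw⟩)
    · exact Or.inr (Or.inl hys)
  reachIn x hx y hy := hx.restrict.symm.trans hy.restrict

lemma IsTerritory.add_five_lt {N : ℕ} (hP : IsEmpty (pathGraph N ↪g G))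
    {p : pathGraph (m + 1) ↪g G} {C : Set V} (hC : IsTerritory G p C) {w b u v : V}
    (hpw : G.Adj (p (Fin.last m)) w) (hwfar : ¬ G.Dominates (p ∘ Fin.castSucc) w) (hb : b ∈ C)
    (hwb : G.Adj w b) (hu : u ∈ C \ G.closedNbhd w) (hv : v ∈ C \ G.closedNbhd w)
    (hbu : G.Adj b u) (huv : G.Adj u v) (hbv : ¬ G.Adj b v) : m + 5 < N := by
  have hvb : v ∉ G.closedNbhd b := by
    rintro (rfl | h)
    · exact hv.2 (Or.inr hwb)
    · exact hbv h
  let p₁ := p.snocPath w hpw hwfar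
  let p₂ := p₁.snocPath b (by simpa [p₁] using hwb)
    (by simpa [p₁] using hC.not_dominates b hb)
  let p₃ := p₂.snocPath u (by simpa [p₂] using hbu) <| by
    simp only [p₂, p₁, Embedding.coe_snocPath, Fin.snoc_comp_castSucc, dominates_snoc, not_or]
    exact ⟨hC.not_dominates u hu.1, hu.2⟩
  let p₄ := p₃.snocPath v (by simpa [p₃] using huv) <| by
    simp only [p₃, p₂, p₁, Embedding.coe_snocPath, Fin.snoc_comp_castSucc, dominates_snoc,
      not_or]
    exact ⟨⟨hC.not_dominates v hv.1, hv.2⟩, hvb⟩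
  exact lt_of_isEmpty_pathGraph_embedding hP p₄

section Pursuit

variable [Finite V]

lemma wins_of_walk {s : Fin m → V} {C : Set V} (hC : IsTerritory G s C) {e : Fin m → Fin n}
    {f : Fin n} (hf : f ∉ Set.range e) {u t : V} (W : G.Walk u t)
    (ht : ∀ cops : Fin n → V, cops ∘ e = s → cops f = t → ∀ r ∈ C, Wins G cops r)
    {cops : Fin n → V} (hcops : cops ∘ e = s) (hu : cops f = u) {r : V} (hr : r ∈ C) :
    Wins G cops r := by
  classical
  induction W generalizing cops r with
  | nil => exact ht cops hcops hu r hr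
  | @cons u v t huv W ih =>
    have hcops' : Function.update cops f v ∘ e = s := by
      rw [Function.update_comp_eq_of_notMem_range _ _ hf, hcops]
    refine wins_of_isMove (isMove_update cops (hu ▸ Or.inr huv)) fun r' hr' => ?_
    rcases hC.mem_or_dominates r hr r' hr' with hr'C | hs
    · exact ih ht hcops' (by simp) hr'C
    · exact wins_of_dominates (Dominates.comp (hcops' ▸ hs))

lemma wins_of_dominating (hclaw : IsEmpty (completeBipartiteGraph (Fin 1) (Fin 3) ↪g G))
    {p : Fin (m + 1) → V} {C : Set V} (hC : IsTerritory G p C) {w b r : V}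
    (hpw : G.Adj (p (Fin.last m)) w) (hb : b ∈ C) (hwb : G.Adj w b) (hr : r ∈ C)
    (hdom : ∀ y ∈ G.closedNbhd r, y ∈ C → y ∉ G.closedNbhd w → G.Adj b y)
    {e : Fin (m + 1) → Fin n} {f : Fin n} (hf : f ∉ Set.range e) {cops : Fin n → V}
    (hcops : cops ∘ e = p) (hcw : cops f = w) : Wins G cops r := by
  classical
  refine wins_of_isMove (isMove_update cops (hcw ▸ Or.inr hwb)) fun y hy => ?_
  rcases hC.mem_or_dominates r hr y hy with hyC | hy
  · have hfar : ∀ z ∈ C, z ∉ G.closedNbhd (p (Fin.last m)) :=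
      fun z hz hpz => hC.not_dominates z hz ⟨_, hpz⟩
    refine wins_of_dominates ⟨f, ?_⟩
    rw [Function.update_self, mem_closedNbhd, or_iff_not_imp_left]
    intro hyb
    by_cases hyw : y ∈ G.closedNbhd w
    · rcases hyw with rfl | hwy
      · exact absurd (Or.inr hpw) (hfar y hyC)
      · exact adj_of_isEmpty_claw_embedding hclaw hpw.symm hwb hwy (hfar b hb) (hfar y hyC)
          (Ne.symm hyb)
    · exact hdom y hy hyC hyw
  · rw [← Function.update_comp_eq_of_notMem_range cops b hf] at hcops
    exact wins_of_dominates (Dominates.comp (hcops ▸ hy))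

/-- Cops `0, …, m` stand on the path `p`, and cop `m + 1` is the spare one. -/
theorem wins_of_isTerritory (hG : G.Preconnected) (hP : IsEmpty (pathGraph (n + 3) ↪g G))
    (hclaw : IsEmpty (completeBipartiteGraph (Fin 1) (Fin 3) ↪g G)) (hm : m + 2 ≤ n)
    (p : pathGraph (m + 1) ↪g G) {C : Set V} (hC : IsTerritory G p C) {w : V}
    (hpw : G.Adj (p (Fin.last m)) w) (hwfar : ¬ G.Dominates (p ∘ Fin.castSucc) w) {a : V}
    (ha : a ∈ C) (hwa : G.Adj w a) {cops : Fin n → V}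
    (hcops : cops ∘ Fin.castLE (by omega) = p) {r : V} (hr : r ∈ C) : Wins G cops r := by
  induction hN : C.ncard using Nat.strong_induction_on generalizing m C w a cops r with
  | _ N IH =>
  let f : Fin n := ⟨m + 1, by omega⟩
  have hf : f ∉ Set.range (Fin.castLE (by omega : m + 1 ≤ n)) := by
    rintro ⟨i, hi⟩
    have := congrArg Fin.val hi
    simp only [Fin.val_castLE, f] at this
    omega
  refine wins_of_walk hC hf (hG (cops f) w).some (fun cops hcops hcw r hr => ?_) hcops rfl hr
  by_cases hrw : r ∈ G.closedNbhd w
  · exact wins_of_dominates ⟨f, hcw ▸ hrw⟩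
  obtain ⟨x, b, hx, hb, hwb, hxb⟩ :=
    exists_adj_of_reachIn (hC.reachIn r hr a ha) hrw (Or.inr hwa)
  set D := {z | G.ReachIn (C \ G.closedNbhd w) r z}
  by_cases hdom : ∀ z ∈ D, G.Adj b z
  · refine wins_of_dominating hclaw hC hpw hb hwb hr (fun y hy hyC hyw => hdom y ?_) hf hcops hcw
    rcases hy with rfl | hry
    · exact .refl ⟨hyC, hyw⟩
    · exact .tail (.refl ⟨hr, hrw⟩) hry ⟨hyC, hyw⟩
  push Not at hdom
  obtain ⟨z, hz, hbz⟩ := hdom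
  obtain ⟨u, v, hu, hv, huv, hbu, hbv⟩ :=
    (hx.symm.trans hz).exists_adj_of_not (P := G.Adj b) hxb.symm hbz
  let p' := p.snocPath w hpw hwfar
  have hlen := hC.add_five_lt hP hpw hwfar hb hwb hu hv hbu huv hbv
  have hDC : D ⊂ C :=
    ⟨fun z hz => hz.mem_right.1, fun hCD => (hCD ha).mem_right.2 (Or.inr hwa)⟩
  refine IH D.ncard (hN ▸ Set.ncard_lt_ncard hDC) (by omega) p' (hC.component r w)
    (by simpa [p'] using hwb) (by simpa [p'] using hC.not_dominates b hb) hx hxb.symm ?_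
    (.refl ⟨hr, hrw⟩) rfl
  rw [Fin.comp_castLE_eq_snoc, hcops, hcw]
  rfl

end Pursuit

end CopsAndRobber

open CopsAndRobber

theorem cop_number_of_path_claw_free {V : Type*} [Fintype V] (G : SimpleGraph V) (k : ℕ)
    (hk : 5 ≤ k) (hconn : G.Connected)
    (hPfree : IsEmpty (pathGraph k ↪g G))
    (hclawfree : IsEmpty (completeBipartiteGraph (Fin 1) (Fin 3) ↪g G)) :
    copNumber G ≤ k - 3 := by
  obtain ⟨v₀⟩ := hconn.nonempty
  refine Nat.sInf_le (copWinWith_of_forall_wins (fun _ => v₀) fun r => ?_)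
  by_cases hr : r ∈ G.closedNbhd v₀
  · exact wins_of_dominates ⟨⟨0, by omega⟩, hr⟩
  obtain ⟨x, b, hx, -, hv₀b, hxb⟩ :=
    exists_adj_of_reachIn (.of_reachable (hconn.preconnected r v₀)) hr (Or.inl rfl)
  let p₀ : pathGraph 1 ↪g G :=
    ⟨⟨fun _ => v₀, fun i j _ => Subsingleton.elim i j⟩,
      fun {i j} => by simp [Subsingleton.elim i j]⟩
  have hC : IsTerritory G p₀ {z | G.ReachIn (Set.univ \ G.closedNbhd v₀) r z} := by
    convert (isTerritory_univ hconn.preconnected).component r v₀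
    funext i
    fin_cases i
    rfl
  exact wins_of_isTerritory (n := k - 3) hconn.preconnected
    (by rwa [Nat.sub_add_cancel (by omega)]) hclawfree (by omega) p₀ hC hv₀b
    (fun ⟨i, _⟩ => i.elim0) hx hxb.symm rfl (.refl ⟨trivial, hr⟩)
end

section
/- Let k ≥ 2 and i_1, …, i_k ≥ 1 with at least one i_j ≥ 3. If a finite connected graph G contains no induced subgraph isomorphic to the disjoint union of paths P_{i_1} + P_{i_2} + … + P_{i_k}, then the cop number of G is at most i_1 + i_2 + … + i_k − 2. -/
open SimpleGraph

/-- The disjoint union of paths `P_{i 0} + P_{i 1} + ⋯`, one path on `i j`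
vertices for each `j : Fin k`. -/
def pathsUnion {k : ℕ} (i : Fin k → ℕ) : SimpleGraph (Σ j, Fin (i j)) where
  Adj a b := a.1 = b.1 ∧ (((a.2 : ℕ) + 1 = b.2) ∨ ((b.2 : ℕ) + 1 = a.2))
  symm := ⟨by rintro ⟨ja, a⟩ ⟨jb, b⟩ ⟨h1, h2⟩; exact ⟨h1.symm, h2.symm⟩⟩
  loopless := ⟨by rintro ⟨j, a⟩ ⟨-, h2⟩; omega⟩

/-!
Remove a longest path `P_M` from the forbidden union. If the remaining paths do not occur as an
induced subgraph, induction applies. Otherwise one cop is parked on each vertex of such a copy `A`,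
which confines the robber to the vertices far from `A`, and there `max (M - 2) 1` further cops run
the Gyárfás path argument (as for `P_t`-free graphs, Joret–Kamiński–Theis): they occupy the
vertices of an induced path, each new vertex a neighbour of the previous one adjacent to the
robber's territory, a connected region that shrinks at every step. An evading robber thereby
yields an induced `P_M` far from `A`, completing a forbidden induced subgraph.
-/

namespace SimpleGraph

variable {V : Type*} {G : SimpleGraph V}

lemma spanningCoe_induce_adj {W : Set V} {u v : V} :
    (G.induce W).spanningCoe.Adj u v ↔ G.Adj u v ∧ u ∈ W ∧ v ∈ W := by
  simp only [map_adj, Function.Embedding.subtype_apply, comap_adj]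
  constructor
  · rintro ⟨u, v, h, rfl, rfl⟩
    exact ⟨h, u.2, v.2⟩
  · rintro ⟨h, hu, hv⟩
    exact ⟨⟨u, hu⟩, ⟨v, hv⟩, h, rfl, rfl⟩

end SimpleGraph

namespace CopsAndRobber

variable {V : Type*} (G : SimpleGraph V) {n : ℕ}

def IsCopMove (c c' : Fin n → V) : Prop := ∀ i, c' i = c i ∨ G.Adj (c i) (c' i)

def IsRobberMove (r r' : V) : Prop := r' = r ∨ G.Adj r r'

/-- With the cops to move at position `(c, r)`, they can force a capture within `m` rounds. -/
def CaptureWithin : ℕ → (Fin n → V) → V → Prop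
  | 0, c, r => r ∈ Set.range c
  | m + 1, c, r => r ∈ Set.range c ∨ ∃ c', IsCopMove G c c' ∧
      (r ∈ Set.range c' ∨ ∀ r', IsRobberMove G r r' → CaptureWithin m c' r')

def Evades (c : Fin n → V) (r : V) : Prop := ∀ m, ¬ CaptureWithin G m c r

variable {G}

lemma IsCopMove.refl (c : Fin n → V) : IsCopMove G c c := fun _ => Or.inl rfl

lemma CaptureWithin.mono {m m' : ℕ} (hm : m ≤ m') {c : Fin n → V} {r : V}
    (h : CaptureWithin G m c r) : CaptureWithin G m' c r := by
  induction m generalizing m' c r with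
  | zero => cases m' <;> simp_all [CaptureWithin]
  | succ m ih =>
    obtain ⟨m', rfl⟩ := Nat.exists_eq_add_of_le' (Nat.zero_lt_of_lt hm)
    rcases h with h | ⟨c', hc', h⟩
    · exact Or.inl h
    · exact Or.inr ⟨c', hc', h.imp_right fun h r' hr' => ih (by omega) (h r' hr')⟩

open Classical in
/-- The cops' strategy: a move that keeps the fastest forced capture on schedule. -/
noncomputable def greedyMove (G : SimpleGraph V) (c : Fin n → V) (r : V) : Fin n → V :=
  if h : ∃ c', IsCopMove G c c' ∧ (r ∈ Set.range c' ∨ ∀ r', IsRobberMove G r r' →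
      CaptureWithin G (sInf {m | CaptureWithin G m c r} - 1) c' r') then h.choose else c

lemma isCopMove_greedyMove (c : Fin n → V) (r : V) : IsCopMove G c (greedyMove G c r) := by
  unfold greedyMove
  split_ifs with h
  exacts [h.choose_spec.1, IsCopMove.refl c]

lemma CaptureWithin.greedyMove_step {m : ℕ} {c : Fin n → V} {r : V}
    (h : CaptureWithin G (m + 1) c r) :
    r ∈ Set.range c ∨ r ∈ Set.range (greedyMove G c r) ∨
      ∀ r', IsRobberMove G r r' → CaptureWithin G m (greedyMove G c r) r' := by
  set m₀ := sInf {m | CaptureWithin G m c r} with hm₀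
  have hle : m₀ ≤ m + 1 := Nat.sInf_le h
  have hwin : CaptureWithin G m₀ c r :=
    Nat.sInf_mem (⟨m + 1, h⟩ : {m | CaptureWithin G m c r}.Nonempty)
  obtain _ | k := m₀
  · exact Or.inl hwin
  rcases hwin with hwin | hmove
  · exact Or.inl hwin
  have hmove' : ∃ c', IsCopMove G c c' ∧ (r ∈ Set.range c' ∨ ∀ r', IsRobberMove G r r' →
      CaptureWithin G (sInf {m | CaptureWithin G m c r} - 1) c' r') := by
    rw [← hm₀]; exact hmove
  have hspec := hmove'.choose_spec.2
  rw [greedyMove, dif_pos hmove']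
  refine Or.inr (hspec.imp_right fun h r' hr' => (h r' hr').mono ?_)
  omega

lemma exists_caught_greedyMove {init : Fin n → V} {rob : (Fin n → V) → V → V} {r₀ : V}
    (hrob : ∀ c r, IsRobberMove G r (rob c r)) {m t : ℕ}
    (h : CaptureWithin G m (copsRobberSeq init (greedyMove G) rob r₀ t).1
      (copsRobberSeq init (greedyMove G) rob r₀ t).2) :
    ∃ t', (copsRobberSeq init (greedyMove G) rob r₀ t').2 ∈
        Set.range (copsRobberSeq init (greedyMove G) rob r₀ t').1 ∨
      (copsRobberSeq init (greedyMove G) rob r₀ t').2 ∈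
        Set.range (copsRobberSeq init (greedyMove G) rob r₀ (t' + 1)).1 := by
  induction m generalizing t with
  | zero => exact ⟨t, Or.inl h⟩
  | succ m ih =>
    rcases h.greedyMove_step with h | h | h
    · exact ⟨t, Or.inl h⟩
    · exact ⟨t, Or.inr h⟩
    · exact ih (t := t + 1) (h _ (hrob _ _))

lemma copWinWith_of_not_evades (init : Fin n → V) (h : ∀ r, ¬ Evades G init r) :
    CopWinWith G n := by
  refine ⟨init, greedyMove G, isCopMove_greedyMove, fun r₀ rob hrob => ?_⟩
  obtain ⟨m, hm⟩ := not_forall_not.mp (h r₀)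
  obtain ⟨t, ht⟩ := exists_caught_greedyMove (t := 0) hrob hm
  exact ⟨t, ht.imp Set.mem_range.mp Set.mem_range.mp⟩

variable (G) in
def farFrom (P : Set V) : Set V := {v | ∀ u ∈ P, u ≠ v ∧ ¬ G.Adj u v}

lemma farFrom_anti {P Q : Set V} (h : P ⊆ Q) : farFrom G Q ⊆ farFrom G P :=
  fun _ hv u hu => hv u (h hu)

lemma mem_farFrom_insert {x v : V} {P : Set V} :
    v ∈ farFrom G (insert x P) ↔ (x ≠ v ∧ ¬ G.Adj x v) ∧ v ∈ farFrom G P :=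
  Set.forall_mem_insert ..

lemma IsRobberMove.reachable {W : Set V} {r r' : V} (h : IsRobberMove G r r') (hr : r ∈ W)
    (hr' : r' ∈ W) : (G.induce W).spanningCoe.Reachable r r' := by
  rcases h with rfl | h
  · rfl
  · exact (spanningCoe_induce_adj.mpr ⟨h, hr, hr'⟩).reachable

namespace Evades

variable {c : Fin n → V} {r : V}

lemma ne (h : Evades G c r) (i : Fin n) : c i ≠ r :=
  fun hi => h 0 ⟨i, hi⟩

lemma not_adj (h : Evades G c r) (i : Fin n) : ¬ G.Adj (c i) r := by
  classical
  refine fun hadj => h 1 (Or.inr ⟨Function.update c i r, fun j => ?_, Or.inl ⟨i, by simp⟩⟩)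
  by_cases hj : j = i
  · subst hj; simp [hadj]
  · simp [hj]

lemma mem_farFrom (h : Evades G c r) (S : Set (Fin n)) : r ∈ farFrom G (c '' S) := by
  rintro _ ⟨i, -, rfl⟩
  exact ⟨h.ne i, h.not_adj i⟩

lemma exists_robberMove [Finite V] (h : Evades G c r) {c' : Fin n → V} (hc : IsCopMove G c c') :
    ∃ r', IsRobberMove G r r' ∧ Evades G c' r' := by
  have := Fintype.ofFinite V
  by_contra! hcaught
  choose! m hm using fun r' hr' => not_forall_not.mp (hcaught r' hr')
  exact h (Finset.univ.sup m + 1) (Or.inr ⟨c', hc, Or.inr fun r' hr' =>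
    (hm r' hr').mono (Finset.le_sup (Finset.mem_univ r'))⟩)

lemma exists_update [Finite V] (hconn : G.Connected) {S : Set (Fin n)} {i : Fin n} (hi : i ∉ S)
    (h : Evades G c r) (v : V) :
    ∃ r', Evades G (Function.update c i v) r' ∧
      (G.induce (farFrom G (c '' S))).spanningCoe.Reachable r r' := by
  classical
  suffices ∀ {u} (p : G.Walk u v) {c : Fin n → V} {r : V}, c i = u → Evades G c r →
      ∃ r', Evades G (Function.update c i v) r' ∧
        (G.induce (farFrom G (c '' S))).spanningCoe.Reachable r r' from
    this (hconn.preconnected (c i) v).some rfl h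
  intro u p
  induction p with
  | nil => exact fun hc h => ⟨_, by rwa [← hc, Function.update_eq_self], .rfl⟩
  | @cons u b v hub p ih =>
    intro c r hc h
    have hS : (Function.update c i b) '' S = c '' S :=
      Set.image_congr fun j hj => Function.update_of_ne (ne_of_mem_of_not_mem hj hi) _ _
    have hmove : IsCopMove G c (Function.update c i b) := fun j => by
      by_cases hj : j = i
      · subst hj; simp [hc, hub]
      · simp [hj]
    obtain ⟨r₁, hr₁, hesc₁⟩ := h.exists_robberMove hmove
    obtain ⟨r', hesc', hreach⟩ := ih (by simp) hesc₁
    rw [Function.update_idem] at hesc'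
    rw [hS] at hreach
    exact ⟨r', hesc', (hr₁.reachable (h.mem_farFrom S) (hS ▸ hesc₁.mem_farFrom S)).trans hreach⟩

end Evades

variable (G) in
def IsInducedPath (y : ℕ → V) (m : ℕ) : Prop :=
  ∀ p < m, ∀ q < m, (y p = y q → p = q) ∧ (G.Adj (y p) (y q) ↔ p + 1 = q ∨ q + 1 = p)

lemma IsInducedPath.mono {y : ℕ → V} {m m' : ℕ} (h : IsInducedPath G y m) (hm : m' ≤ m) :
    IsInducedPath G y m' :=
  fun p hp q hq => h p (by omega) q (by omega)

lemma isInducedPath_one (v : V) : IsInducedPath G (fun _ => v) 1 := by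
  intro p hp q hq
  simp only [G.irrefl, false_iff]
  omega

lemma IsInducedPath.snoc {y : ℕ → V} {m : ℕ} {z : V} (h : IsInducedPath G y (m + 1))
    (hadj : G.Adj (y m) z) (hfar : ∀ p < m, y p ≠ z ∧ ¬ G.Adj (y p) z) :
    IsInducedPath G (Function.update y (m + 1) z) (m + 2) := by
  have hfar' : ∀ p < m + 1, y p ≠ z ∧ (G.Adj (y p) z ↔ p = m) := fun p hp => by
    rcases Nat.lt_succ_iff_lt_or_eq.mp hp with hp | rfl
    · exact ⟨(hfar p hp).1, iff_of_false (hfar p hp).2 (by omega)⟩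
    · exact ⟨hadj.ne, iff_of_true hadj rfl⟩
  intro p hp q hq
  rcases Nat.lt_succ_iff_lt_or_eq.mp hp with hp | rfl <;>
    rcases Nat.lt_succ_iff_lt_or_eq.mp hq with hq | rfl <;>
    simp only [Function.update_self, ne_eq, Nat.ne_of_lt hp, Nat.ne_of_lt hq, not_false_eq_true,
      Function.update_of_ne]
  · exact h p hp q hq
  · exact ⟨fun he => absurd he (hfar' p hp).1, by rw [(hfar' p hp).2]; omega⟩
  · exact ⟨fun he => absurd he.symm (hfar' q hq).1, by rw [G.adj_comm, (hfar' q hq).2]; omega⟩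
  · simp

/-- The Gyárfás step: on a walk inside `farFrom G Q` from `w ∈ N[x]` to the robber, the edge that
enters the robber's component of `farFrom G (insert x Q)` starts at a neighbour `z` of `x`. -/
lemma exists_adj_adj_of_reachable {Q : Set V} {x w r : V} (hw : w = x ∨ G.Adj x w)
    (hwr : (G.induce (farFrom G Q)).spanningCoe.Reachable w r)
    (hr : r ∈ farFrom G (insert x Q)) :
    ∃ z w', z ∈ farFrom G Q ∧ G.Adj x z ∧ G.Adj z w' ∧ w' ∈ farFrom G (insert x Q) ∧
      (G.induce (farFrom G (insert x Q))).spanningCoe.Reachable r w' := by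
  set D := {v | v ∈ farFrom G (insert x Q) ∧
    (G.induce (farFrom G (insert x Q))).spanningCoe.Reachable r v}
  obtain ⟨p⟩ := hwr
  have hwD : w ∉ D := fun hwD => by
    have := (mem_farFrom_insert.mp hwD.1).1
    rcases hw with rfl | hw
    exacts [this.1 rfl, this.2 hw]
  obtain ⟨d, -, hzD, hw'D⟩ := p.exists_boundary_dart Dᶜ hwD (fun hrD => hrD ⟨hr, .rfl⟩)
  obtain ⟨hzw', hz, -⟩ := spanningCoe_induce_adj.mp d.adj
  obtain ⟨hw', hrw'⟩ := not_not.mp hw'D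
  have hxw' := (mem_farFrom_insert.mp hw').1
  refine ⟨d.fst, d.snd, hz, ?_, hzw', hw', hrw'⟩
  by_contra hxz
  have hz' : d.fst ∈ farFrom G (insert x Q) :=
    mem_farFrom_insert.mpr ⟨⟨fun hxz => hxw'.2 (hxz ▸ hzw'), hxz⟩, hz⟩
  exact hzD ⟨hz', hrw'.trans (spanningCoe_induce_adj.mpr ⟨hzw'.symm, hw', hz'⟩).reachable⟩

variable (G) in
/-- Stage `t` of the Gyárfás construction: the cops on `S` guard the parked set `P` and the path
`y 0, …, y (t - 1)`, and the cop `ℓ` stands on its endpoint `y t`. -/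
structure Chase (P : Set V) (S : Set (Fin n)) (ℓ : Fin n) (c : Fin n → V) (r : V) (y : ℕ → V)
    (t : ℕ) : Prop where
  parked : P ⊆ c '' S
  last_notMem : ℓ ∉ S
  last : c ℓ = y t
  guarded : ∀ p < t, y p ∈ c '' S
  path : IsInducedPath G y (t + 1)
  far : ∀ p ≤ t, y p ∈ farFrom G P
  evades : Evades G c r
  reach : ∃ w, (w = y t ∨ G.Adj (y t) w) ∧
    (G.induce (farFrom G (c '' S))).spanningCoe.Reachable w r

namespace Chase

variable {P : Set V} {S : Set (Fin n)} {ℓ : Fin n} {c : Fin n → V} {r : V} {y : ℕ → V} {t : ℕ}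

lemma mem_image_insert (h : Chase G P S ℓ c r y t) {p : ℕ} (hp : p ≤ t) :
    y p ∈ c '' insert ℓ S := by
  rcases hp.lt_or_eq with hp | rfl
  · exact Set.image_mono (Set.subset_insert ℓ S) (h.guarded p hp)
  · exact ⟨ℓ, Set.mem_insert ℓ S, h.last⟩

lemma farFrom_subset (h : Chase G P S ℓ c r y t) : farFrom G (c '' S) ⊆ farFrom G P :=
  farFrom_anti h.parked

lemma exists_adj_adj (h : Chase G P S ℓ c r y t) :
    ∃ z w', z ∈ farFrom G (c '' S) ∧ G.Adj (y t) z ∧ G.Adj z w' ∧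
      w' ∈ farFrom G (c '' insert ℓ S) ∧
      (G.induce (farFrom G (c '' insert ℓ S))).spanningCoe.Reachable r w' := by
  have himage : c '' insert ℓ S = insert (y t) (c '' S) := by rw [Set.image_insert_eq, h.last]
  obtain ⟨w, hw, hwr⟩ := h.reach
  rw [himage]
  exact exists_adj_adj_of_reachable hw hwr (himage ▸ h.evades.mem_farFrom _)

lemma exists_inducedPath (h : Chase G P S ℓ c r y t) :
    ∃ y', IsInducedPath G y' (t + 3) ∧ ∀ p < t + 3, y' p ∈ farFrom G P := by
  obtain ⟨z, w', hz, hyz, hzw', hw', -⟩ := h.exists_adj_adj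
  have hpath₁ := h.path.snoc hyz fun p hp => hz (y p) (h.guarded p hp)
  have hpath₂ := hpath₁.snoc (z := w') (by simpa using hzw') fun p hp => by
    rw [Function.update_of_ne (by omega)]
    exact hw' (y p) (h.mem_image_insert (by omega))
  refine ⟨_, hpath₂, fun p hp => ?_⟩
  rcases (show p ≤ t ∨ p = t + 1 ∨ p = t + 2 by omega) with hp | rfl | rfl
  · simpa [show p ≠ t + 1 by omega, show p ≠ t + 2 by omega] using h.far p hp
  · simpa using h.farFrom_subset hz
  · simpa using h.farFrom_subset (farFrom_anti (Set.image_mono (Set.subset_insert ℓ S)) hw')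

lemma step [Finite V] (h : Chase G P S ℓ c r y t) (hconn : G.Connected) {ℓ' : Fin n}
    (hℓ' : ℓ' ∉ insert ℓ S) :
    ∃ z r', Chase G P (insert ℓ S) ℓ' (Function.update c ℓ' z) r'
      (Function.update y (t + 1) z) (t + 1) := by
  obtain ⟨z, w', hz, hyz, hzw', -, hrw'⟩ := h.exists_adj_adj
  obtain ⟨r', hesc, hrr'⟩ := h.evades.exists_update hconn hℓ' z
  have himage : Function.update c ℓ' z '' insert ℓ S = c '' insert ℓ S :=
    Set.image_congr fun j hj => Function.update_of_ne (ne_of_mem_of_not_mem hj hℓ') _ _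
  refine ⟨z, r', ⟨?_, hℓ', by simp, fun p hp => ?_, ?_, fun p hp => ?_, hesc, ?_⟩⟩
  · exact himage ▸ h.parked.trans (Set.image_mono (Set.subset_insert ℓ S))
  · rw [Function.update_of_ne (by omega), himage]
    exact h.mem_image_insert (by omega)
  · exact h.path.snoc hyz fun p hp => hz (y p) (h.guarded p hp)
  · rcases hp.lt_or_eq with hp | rfl
    · rw [Function.update_of_ne (by omega)]
      exact h.far p (by omega)
    · simpa using h.farFrom_subset hz
  · refine ⟨w', Or.inr (by simpa using hzw'), ?_⟩
    rw [himage]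
    exact hrw'.symm.trans hrr'

lemma exists_inducedPath_of_free [Finite V] (h : Chase G P S ℓ c r y t) (hconn : G.Connected)
    (F : Finset (Fin n)) (hF : ∀ f ∈ F, f ∉ insert ℓ S) :
    ∃ y', IsInducedPath G y' (t + F.card + 3) ∧ ∀ p < t + F.card + 3, y' p ∈ farFrom G P := by
  classical
  induction F using Finset.induction_on generalizing S ℓ c r y t with
  | empty => simpa using h.exists_inducedPath
  | insert ℓ' F hℓ'F ih =>
    obtain ⟨z, r', h'⟩ := h.step hconn (hF ℓ' (Finset.mem_insert_self ℓ' F))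
    have hF' : ∀ f ∈ F, f ∉ insert ℓ' (insert ℓ S) := fun f hf => by
      rintro (rfl | hf')
      exacts [hℓ'F hf, hF f (Finset.mem_insert_of_mem hf) hf']
    rw [Finset.card_insert_of_notMem hℓ'F, ← add_assoc, add_right_comm t]
    exact ih h' hF'

end Chase

lemma Evades.chase [Finite V] {c : Fin n → V} {r : V} (h : Evades G c r) (hconn : G.Connected)
    {S : Set (Fin n)} {ℓ : Fin n} (hℓ : ℓ ∉ S) :
    ∃ r', Chase G (c '' S) S ℓ (Function.update c ℓ r) r' (fun _ => r) 0 := by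
  obtain ⟨r', hesc, hrr'⟩ := h.exists_update hconn hℓ r
  have himage : Function.update c ℓ r '' S = c '' S :=
    Set.image_congr fun j hj => Function.update_of_ne (ne_of_mem_of_not_mem hj hℓ) _ _
  refine ⟨r', ⟨himage.ge, hℓ, by simp, fun p hp => absurd hp p.not_lt_zero, isInducedPath_one r,
    fun _ _ => h.mem_farFrom S, hesc, r, Or.inl rfl, himage ▸ hrr'⟩⟩

theorem Evades.exists_inducedPath [Finite V] {c : Fin n → V} {r : V} (h : Evades G c r)
    (hconn : G.Connected) (S : Set (Fin n)) (F : Finset (Fin n)) (hF : ∀ f ∈ F, f ∉ S)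
    (hne : F.Nonempty) :
    ∃ y, IsInducedPath G y (F.card + 2) ∧ ∀ p < F.card + 2, y p ∈ farFrom G (c '' S) := by
  classical
  obtain ⟨ℓ, hℓ⟩ := hne
  obtain ⟨r', hchase⟩ := h.chase hconn (hF ℓ hℓ)
  have hF' : ∀ f ∈ F.erase ℓ, f ∉ insert ℓ S := fun f hf => by
    rintro (rfl | hfS)
    exacts [(Finset.mem_erase.mp hf).1 rfl, hF f (Finset.mem_of_mem_erase hf) hfS]
  have hcard : 0 + (F.erase ℓ).card + 3 = F.card + 2 := by
    rw [Finset.card_erase_of_mem hℓ]; have := Finset.card_pos.mpr ⟨ℓ, hℓ⟩; omega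
  simpa only [hcard] using hchase.exists_inducedPath_of_free hconn (F.erase ℓ) hF'

section Paths

variable {ι : Type*} {i : ι → ℕ}

variable (G) in
def InducesPaths (i : ι → ℕ) (s : Finset ι) (x : ι → ℕ → V) : Prop :=
  ∀ j ∈ s, ∀ j' ∈ s, ∀ p < i j, ∀ q < i j', (x j p = x j' q → j = j' ∧ p = q) ∧
    (G.Adj (x j p) (x j' q) ↔ j = j' ∧ (p + 1 = q ∨ q + 1 = p))

lemma inducesPaths_empty (x : ι → ℕ → V) : InducesPaths G i ∅ x := by
  simp [InducesPaths]

def pathsVertices [DecidableEq V] (i : ι → ℕ) (s : Finset ι) (x : ι → ℕ → V) : Finset V :=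
  s.biUnion fun j => (Finset.range (i j)).image (x j)

lemma card_pathsVertices_le [DecidableEq V] (s : Finset ι) (x : ι → ℕ → V) :
    (pathsVertices i s x).card ≤ ∑ j ∈ s, i j :=
  Finset.card_biUnion_le.trans <| Finset.sum_le_sum fun _ _ =>
    Finset.card_image_le.trans (Finset.card_range _).le

lemma InducesPaths.insert [DecidableEq ι] [DecidableEq V] {s : Finset ι} {x : ι → ℕ → V}
    (h : InducesPaths G i s x) {a : ι} (ha : a ∉ s) {y : ℕ → V} (hy : IsInducedPath G y (i a))
    (hfar : ∀ p < i a, y p ∈ farFrom G (pathsVertices i s x)) :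
    InducesPaths G i (insert a s) (Function.update x a y) := by
  have hsep : ∀ j ∈ s, ∀ p < i j, ∀ q < i a, x j p ≠ y q ∧ ¬ G.Adj (x j p) (y q) :=
    fun j hj p hp q hq => hfar q hq (x j p) <|
      Finset.mem_biUnion.mpr ⟨j, hj, Finset.mem_image_of_mem _ (Finset.mem_range.mpr hp)⟩
  have hne : ∀ j ∈ s, j ≠ a := fun j hj hja => ha (hja ▸ hj)
  intro j hj j' hj' p hp q hq
  rcases Finset.mem_insert.mp hj with rfl | hjs <;>
    rcases Finset.mem_insert.mp hj' with rfl | hjs'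
  · simpa using hy p hp q hq
  · simp only [Function.update_self, Function.update_of_ne (hne j' hjs'), (hne j' hjs').symm,
      false_and, iff_false]
    exact ⟨fun he => (hsep j' hjs' q hq p hp).1 he.symm,
      fun hadj => (hsep j' hjs' q hq p hp).2 hadj.symm⟩
  · simp only [Function.update_self, Function.update_of_ne (hne j hjs), hne j hjs, false_and,
      iff_false]
    exact hsep j hjs p hp q hq
  · simpa [hne j hjs, hne j' hjs'] using h j hjs j' hjs' p hp q hq

lemma InducesPaths.nonempty_embedding {k : ℕ} {i : Fin k → ℕ} {x : Fin k → ℕ → V}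
    (h : InducesPaths G i Finset.univ x) : Nonempty (pathsUnion i ↪g G) := by
  refine ⟨⟨⟨fun v => x v.1 v.2, fun ⟨j, p⟩ ⟨j', q⟩ he => ?_⟩, fun {v w} => ?_⟩⟩
  · obtain ⟨rfl, hpq⟩ := (h j (by simp) j' (by simp) p p.2 q q.2).1 he
    rw [Fin.ext hpq]
  · exact (h v.1 (by simp) w.1 (by simp) v.2 v.2.2 w.2 w.2.2).2

end Paths

lemma exists_subset_image_card_eq [Nonempty V] (A : Finset V) (hA : A.card ≤ n) :
    ∃ (c : Fin n → V) (S : Finset (Fin n)), S.card = A.card ∧ ↑A ⊆ c '' ↑S := by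
  obtain ⟨e⟩ : Nonempty (A ↪ Fin n) := Function.Embedding.nonempty_of_card_le (by simpa using hA)
  refine ⟨Function.extend e Subtype.val fun _ => Classical.arbitrary V, Finset.univ.map e,
    by simp, fun v hv => ⟨e ⟨v, hv⟩, by simp, e.injective.extend_apply _ _ _⟩⟩

theorem exists_forall_not_evades [Finite V] (hconn : G.Connected) (A : Finset V) {m : ℕ}
    (hn : A.card < n) (hm : m ≤ n - A.card + 2)
    (hfree : ¬ ∃ y, IsInducedPath G y m ∧ ∀ p < m, y p ∈ farFrom G A) :
    ∃ c : Fin n → V, ∀ r, ¬ Evades G c r := by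
  classical
  have := hconn.nonempty
  obtain ⟨c, S, hS, hA⟩ := exists_subset_image_card_eq A hn.le
  refine ⟨c, fun r hr => hfree ?_⟩
  have hcard : (Finset.univ \ S).card = n - A.card := by
    rw [Finset.card_sdiff_of_subset (Finset.subset_univ S), hS, Finset.card_univ, Fintype.card_fin]
  obtain ⟨y, hy, hyfar⟩ := hr.exists_inducedPath hconn S (Finset.univ \ S)
    (fun f hf => (Finset.mem_sdiff.mp hf).2) (Finset.card_pos.mp (by omega))
  exact ⟨y, hy.mono (by omega), fun p hp => farFrom_anti hA (hyfar p (by omega))⟩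

theorem exists_forall_not_evades_of_free [Finite V] (hconn : G.Connected) {ι : Type*}
    [DecidableEq ι] (i : ι → ℕ) (t : Finset ι) (hi : ∀ j ∈ t, 1 ≤ i j)
    (hfree : ∀ x, ¬ InducesPaths G i t x) {n : ℕ} (hn : ∑ j ∈ t, i j ≤ n + 2)
    (hn' : (∀ j ∈ t, i j ≤ 2) → ∑ j ∈ t, i j ≤ n) :
    ∃ c : Fin n → V, ∀ r, ¬ Evades G c r := by
  classical
  induction t using Finset.induction_on_max_value i generalizing n with
  | empty => exact absurd (inducesPaths_empty fun _ _ => hconn.nonempty.some) (hfree _)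
  | insert a s ha hmax ih =>
    rw [Finset.sum_insert ha] at hn hn'
    have ha1 := hi a (Finset.mem_insert_self a s)
    have hsmall : i a ≤ 2 → ∑ j ∈ s, i j + i a ≤ n := fun ha2 =>
      by simpa [add_comm] using hn' (Finset.forall_mem_insert _ _ _ |>.mpr
        ⟨ha2, fun j hj => (hmax j hj).trans ha2⟩)
    by_cases hs : ∃ x, InducesPaths G i s x
    · obtain ⟨x, hx⟩ := hs
      have hcard := card_pathsVertices_le (i := i) s x
      refine exists_forall_not_evades hconn (pathsVertices i s x) (m := i a) ?_ ?_ ?_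
      · rcases le_or_gt (i a) 2 with ha2 | ha2
        · have := hsmall ha2; omega
        · omega
      · rcases le_or_gt (i a) 2 with ha2 | ha2 <;> omega
      · rintro ⟨y, hy, hyfar⟩
        exact hfree _ (hx.insert ha hy hyfar)
    · simp only [not_exists] at hs
      refine ih (fun j hj => hi j (Finset.mem_insert_of_mem hj)) hs (by omega) fun hs2 => ?_
      rcases le_or_gt (i a) 2 with ha2 | ha2
      · have := hsmall ha2; omega
      · omega

end CopsAndRobber

theorem cop_number_of_pathsUnion_free_general {V : Type*} [Fintype V] (G : SimpleGraph V)
    (k : ℕ) (i : Fin k → ℕ) (hi : ∀ j, 1 ≤ i j) (hi3 : ∃ j, 3 ≤ i j)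
    (hconn : G.Connected) (hfree : IsEmpty (pathsUnion i ↪g G)) :
    copNumber G ≤ (∑ j, i j) - 2 := by
  obtain ⟨j₃, hj₃⟩ := hi3
  obtain ⟨c, hc⟩ := CopsAndRobber.exists_forall_not_evades_of_free hconn i Finset.univ
    (fun j _ => hi j) (fun x hx => hfree.false hx.nonempty_embedding.some)
    (n := (∑ j, i j) - 2) (by omega) fun h => absurd (h j₃ (Finset.mem_univ _)) (by omega)
  exact Nat.sInf_le (CopsAndRobber.copWinWith_of_not_evades c hc)

theorem cop_number_of_pathsUnion_free {V : Type*} [Fintype V] (G : SimpleGraph V)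
    (k : ℕ) (hk : 2 ≤ k) (i : Fin k → ℕ) (hi : ∀ j, 1 ≤ i j) (hi3 : ∃ j, 3 ≤ i j)
    (hconn : G.Connected) (hfree : IsEmpty (pathsUnion i ↪g G)) :
    copNumber G ≤ (∑ j, i j) - 2 :=
  cop_number_of_pathsUnion_free_general G k i hi hi3 hconn hfree
end

section
/- Let G be a connected 2P_2-free graph of diameter 2, let u_0 and v_0 be adjacent vertices, and let z_0 be a vertex adjacent to neither u_0 nor v_0. If additionally G contains no induced complement-of-P_5 and z_0 has a neighbor w_0 that is adjacent to both u_0 and v_0, then every neighbor u' of z_0 that is adjacent to u_0 but not v_0 is adjacent to w_0. -/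
/-!
If `u'` were not adjacent to `w₀`, the 5-cycle `u₀ v₀ w₀ z₀ u'` would be induced apart from the
single chord `u₀w₀`, i.e. `u₀ z₀ v₀ u' w₀` would induce the complement of `P₅` (a house).
-/

open SimpleGraph

namespace SimpleGraph

variable {V W : Type*} {G : SimpleGraph V} {H : SimpleGraph W}

theorem injective_of_adj_iff (hH : Function.Injective H.neighborSet) {f : W → V}
    (hf : ∀ i j, G.Adj (f i) (f j) ↔ H.Adj i j) : Function.Injective f := by
  intro i j hij
  apply hH
  ext k
  simp only [mem_neighborSet, ← hf, hij]

def Embedding.ofAdjIff (hH : Function.Injective H.neighborSet) (f : W → V)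
    (hf : ∀ i j, G.Adj (f i) (f j) ↔ H.Adj i j) : H ↪g G :=
  ⟨⟨f, injective_of_adj_iff hH hf⟩, hf _ _⟩

theorem compl_pathGraph_five_neighborSet_injective :
    Function.Injective (pathGraph 5)ᶜ.neighborSet := by
  intro i j h
  have hij : ∀ k, (pathGraph 5)ᶜ.Adj i k ↔ (pathGraph 5)ᶜ.Adj j k :=
    fun k => Set.ext_iff.mp h k
  clear h
  simp only [compl_adj, pathGraph_adj] at hij
  revert i j
  decide

theorem nonempty_compl_pathGraph_five_embedding {a b c d e : V}
    (hab : ¬G.Adj a b) (hbc : ¬G.Adj b c) (hcd : ¬G.Adj c d) (hde : ¬G.Adj d e)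
    (hac : G.Adj a c) (had : G.Adj a d) (hae : G.Adj a e)
    (hbd : G.Adj b d) (hbe : G.Adj b e) (hce : G.Adj c e) :
    Nonempty ((pathGraph 5)ᶜ ↪g G) := by
  refine ⟨Embedding.ofAdjIff compl_pathGraph_five_neighborSet_injective ![a, b, c, d, e] ?_⟩
  intro i j
  fin_cases i <;> fin_cases j <;> simp_all [compl_adj, pathGraph_adj, G.adj_comm]

end SimpleGraph

theorem private_neighbor_adj_common_neighbor_general {V : Type*} (G : SimpleGraph V)
    (hhouse : IsEmpty ((pathGraph 5)ᶜ ↪g G))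
    (u₀ v₀ z₀ w₀ u' : V)
    (huv : G.Adj u₀ v₀)
    (hz₀u : ¬ G.Adj z₀ u₀) (hz₀v : ¬ G.Adj z₀ v₀)
    (hw₀z : G.Adj z₀ w₀) (hw₀u : G.Adj w₀ u₀) (hw₀v : G.Adj w₀ v₀)
    (hu'z : G.Adj z₀ u') (hu'u : G.Adj u' u₀) (hu'v : ¬ G.Adj u' v₀) :
    G.Adj u' w₀ := by
  by_contra hu'w
  have house : Nonempty ((pathGraph 5)ᶜ ↪g G) :=
    nonempty_compl_pathGraph_five_embedding (mt G.adj_symm hz₀u) hz₀v (mt G.adj_symm hu'v) hu'w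
      huv hu'u.symm hw₀u.symm hu'z hw₀z hw₀v.symm
  exact not_isEmpty_iff.mpr house hhouse

theorem private_neighbor_adj_common_neighbor {V : Type*} [Fintype V] (G : SimpleGraph V)
    (hconn : G.Connected)
    (h2P2 : IsEmpty ((pathGraph 2 ⊕g pathGraph 2) ↪g G))
    (hhouse : IsEmpty ((pathGraph 5)ᶜ ↪g G))
    (hdiam : G.diam = 2)
    (u₀ v₀ z₀ w₀ u' : V)
    (huv : G.Adj u₀ v₀)
    (hz₀u : ¬ G.Adj z₀ u₀) (hz₀v : ¬ G.Adj z₀ v₀)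
    (hw₀z : G.Adj z₀ w₀) (hw₀u : G.Adj w₀ u₀) (hw₀v : G.Adj w₀ v₀)
    (hu'z : G.Adj z₀ u') (hu'u : G.Adj u' u₀) (hu'v : ¬ G.Adj u' v₀) :
    G.Adj u' w₀ :=
  private_neighbor_adj_common_neighbor_general G hhouse u₀ v₀ z₀ w₀ u' huv hz₀u hz₀v hw₀z hw₀u hw₀v
    hu'z hu'u hu'v
end
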